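/- arXiv:1404.3501 — 2 statements merged into one kernel-verified Lean document; each statement's English description precedes it below -/
import Mathlib

section
/- With the matching-based decomposition E₀ ⊆ E₁ ⊆ … ⊆ E_k = E of the edges of G by a maximal matching b₁, …, b_k, if T is a minimal transversal of E_{i−1} (i.e., T ⊆ E and every edge of E_{i−1} is adjacent to some edge of T, minimally so) and T is not a transversal of E_i, then T ∪ {b_i} is a minimal transversal of E_i. -/
/-- Two edges (as unordered pairs) are adjacent if they share an endpoint;
in particular every (nonempty) edge is adjacent to itself. -/
def eAdj {V : Type*} (e f : Sym2 V) : Prop := ∃ v, v ∈ e ∧ v ∈ f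

/-- `b 1, …, b k` is a maximal matching of `G`: the `b j` are edges of `G`, pairwise
non-adjacent, and every edge of `G` is adjacent to some `b j`. -/
def MaxMatching {V : Type*} (G : SimpleGraph V) (k : ℕ) (b : ℕ → Sym2 V) : Prop :=
  (∀ j, 1 ≤ j → j ≤ k → b j ∈ G.edgeSet) ∧
  (∀ j j', 1 ≤ j → j ≤ k → 1 ≤ j' → j' ≤ k → j ≠ j' → ¬ eAdj (b j) (b j')) ∧
  (∀ e ∈ G.edgeSet, ∃ j, 1 ≤ j ∧ j ≤ k ∧ eAdj e (b j))

/-- `V_i = V` minus the endpoints of the later matching edges `b_{i+1}, …, b_k`. -/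
def Vset {V : Type*} (k : ℕ) (b : ℕ → Sym2 V) (i : ℕ) : Set V :=
  {v | ∀ j, i < j → j ≤ k → v ∉ b j}

/-- `E_i`: edges of `G` contained in `V_i`. -/
def Eset {V : Type*} (G : SimpleGraph V) (k : ℕ) (b : ℕ → Sym2 V) (i : ℕ) : Set (Sym2 V) :=
  {e ∈ G.edgeSet | ∀ v ∈ e, v ∈ Vset k b i}

/-- `B_i = E_i \ E_{i-1}`. -/
def Bset {V : Type*} (G : SimpleGraph V) (k : ℕ) (b : ℕ → Sym2 V) (i : ℕ) : Set (Sym2 V) :=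
  Eset G k b i \ Eset G k b (i - 1)

/-- `T` is a transversal of the edge set `E'`: every edge of `E'` is adjacent to
some edge of `T`. -/
def TrOf {V : Type*} (E' T : Set (Sym2 V)) : Prop := ∀ e ∈ E', ∃ f ∈ T, eAdj e f

/-- Private neighbors of `e` w.r.t. `T` within `E'`: edges of `E'` adjacent to `e` but to
no edge of `T \ {e}`. -/
def PrivE {V : Type*} (E' : Set (Sym2 V)) (e : Sym2 V) (T : Set (Sym2 V)) : Set (Sym2 V) :=
  {f ∈ E' | eAdj e f ∧ ∀ g ∈ T \ {e}, ¬ eAdj f g}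

/-- `T` is a minimal transversal of `E'`. -/
def MinTrOf {V : Type*} (E' T : Set (Sym2 V)) : Prop :=
  TrOf E' T ∧ ∀ e ∈ T, (PrivE E' e T).Nonempty

/-!
The edges of `E_i` outside `E_{i-1}` are exactly the ones that meet `b_i`, while no edge of
`E_{i-1}` does. Hence `b_i` covers what `T` misses, every private neighbor of an edge of `T`
in `E_{i-1}` stays private after adding `b_i`, and an edge of `E_i` missed by `T` is a private
neighbor of `b_i`.
-/

theorem eAdj_comm {V : Type*} {e f : Sym2 V} : eAdj e f ↔ eAdj f e :=
  ⟨fun ⟨v, he, hf⟩ => ⟨v, hf, he⟩, fun ⟨v, hf, he⟩ => ⟨v, he, hf⟩⟩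

section Transversal

variable {V : Type*} {E' E'' T : Set (Sym2 V)} {x : Sym2 V}

theorem TrOf.union_singleton (hT : TrOf E' T) (hx : ∀ e ∈ E'' \ E', eAdj e x) :
    TrOf E'' (T ∪ {x}) := by
  intro e he
  by_cases heE' : e ∈ E'
  · obtain ⟨f, hfT, hef⟩ := hT e heE'
    exact ⟨f, Or.inl hfT, hef⟩
  · exact ⟨x, Or.inr rfl, hx e ⟨he, heE'⟩⟩

theorem MinTrOf.union_singleton (hT : MinTrOf E' T) (hE : E' ⊆ E'')
    (hE'x : ∀ f ∈ E', ¬ eAdj f x) (hx : ∀ e ∈ E'' \ E', eAdj e x) (hnot : ¬ TrOf E'' T) :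
    MinTrOf E'' (T ∪ {x}) := by
  refine ⟨hT.1.union_singleton hx, ?_⟩
  rintro t (htT | rfl)
  · obtain ⟨f, hfE', htf, hpriv⟩ := hT.2 t htT
    refine ⟨f, hE hfE', htf, ?_⟩
    rintro g ⟨hgT | rfl, hgt⟩
    · exact hpriv g ⟨hgT, hgt⟩
    · exact hE'x f hfE'
  · obtain ⟨e, heE'', hmiss⟩ : ∃ e ∈ E'', ∀ g ∈ T, ¬ eAdj e g := by
      simpa [TrOf] using hnot
    have heE' : e ∉ E' := fun heE' =>
      let ⟨g, hgT, heg⟩ := hT.1 e heE'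
      hmiss g hgT heg
    refine ⟨e, heE'', eAdj_comm.1 (hx e ⟨heE'', heE'⟩), ?_⟩
    rintro g ⟨hgT | hgx, hgt⟩
    · exact hmiss g hgT
    · exact absurd hgx hgt

end Transversal

section Decomposition

variable {V : Type*} {G : SimpleGraph V} {k : ℕ} {b : ℕ → Sym2 V}

theorem Eset_mono {i j : ℕ} (hij : i ≤ j) : Eset G k b i ⊆ Eset G k b j :=
  fun _ ⟨heG, hV⟩ => ⟨heG, fun v hv l hjl hlk => hV v hv l (hij.trans_lt hjl) hlk⟩

theorem not_eAdj_of_mem_Eset {i j : ℕ} (hji : j < i) (hik : i ≤ k) {f : Sym2 V}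
    (hf : f ∈ Eset G k b j) : ¬ eAdj f (b i) :=
  fun ⟨v, hvf, hvb⟩ => hf.2 v hvf i hji hik hvb

theorem eAdj_of_mem_Bset {i : ℕ} {e : Sym2 V} (he : e ∈ Bset G k b i) : eAdj e (b i) := by
  obtain ⟨⟨heG, hV⟩, hprev⟩ := he
  obtain ⟨v, hve, j, hj, hjk, hvb⟩ : ∃ v ∈ e, ∃ j, i - 1 < j ∧ j ≤ k ∧ v ∈ b j := by
    simpa [Eset, Vset, heG] using hprev
  obtain rfl : j = i := by
    by_contra hji
    exact hV v hve j (by omega) hjk hvb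
  exact ⟨v, hve, hvb⟩

end Decomposition

theorem insert_matching_edge_minTr_general
    {V : Type*} (G : SimpleGraph V) (k : ℕ) (b : ℕ → Sym2 V)
    (i : ℕ) (hi1 : 1 ≤ i) (hik : i ≤ k)
    (T : Set (Sym2 V))
    (hT : MinTrOf (Eset G k b (i - 1)) T)
    (hnot : ¬ TrOf (Eset G k b i) T) :
    MinTrOf (Eset G k b i) (T ∪ {b i}) :=
  hT.union_singleton (Eset_mono (Nat.sub_le i 1))
    (fun _ => not_eAdj_of_mem_Eset (by omega) hik) (fun _ => eAdj_of_mem_Bset) hnot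

/-- if `T` is a minimal transversal of `E_{i-1}` but not a transversal of
`E_i`, then `T ∪ {b_i}` is a minimal transversal of `E_i`. -/
theorem insert_matching_edge_minTr
    {V : Type*} (G : SimpleGraph V) (k : ℕ) (b : ℕ → Sym2 V)
    (hM : MaxMatching G k b) (i : ℕ) (hi1 : 1 ≤ i) (hik : i ≤ k)
    (T : Set (Sym2 V)) (hTE : T ⊆ G.edgeSet)
    (hT : MinTrOf (Eset G k b (i - 1)) T)
    (hnot : ¬ TrOf (Eset G k b i) T) :
    MinTrOf (Eset G k b i) (T ∪ {b i}) :=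
  insert_matching_edge_minTr_general G k b i hi1 hik T hT hnot
end

section
/- Let T be a minimal transversal of E_{i−1} and T' a minimal transversal of E_i with T ⊆ T'. Then every edge e ∈ T' \ T has all its private neighbors (with respect to T' in E_i) contained in B_i = E_i \ E_{i−1}. -/
theorem notMem_of_mem_privE_of_trOf {V : Type*} {E E' T T' : Set (Sym2 V)} {e f : Sym2 V}
    (hT : TrOf E T) (hsub : T ⊆ T') (heT : e ∉ T) (hf : f ∈ PrivE E' e T') : f ∉ E := by
  intro hfE
  obtain ⟨g, hgT, hfg⟩ := hT f hfE
  exact hf.2.2 g ⟨hsub hgT, fun hge => heT (hge ▸ hgT)⟩ hfg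

theorem new_edges_private_neighbors_in_Bi_general
    {V : Type*} (G : SimpleGraph V) (k : ℕ) (b : ℕ → Sym2 V)
    (i : ℕ)
    (T T' : Set (Sym2 V))
    (hT : MinTrOf (Eset G k b (i - 1)) T)
    (hsub : T ⊆ T') :
    ∀ e ∈ T' \ T, PrivE (Eset G k b i) e T' ⊆ Bset G k b i := by
  rintro e ⟨-, heT⟩ f hf
  exact ⟨hf.1, notMem_of_mem_privE_of_trOf hT.1 hsub heT hf⟩

/-- if `T ∈ tr(E_{i-1})`, `T' ∈ tr(E_i)` and `T ⊆ T'`, then every edge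
`e ∈ T' \ T` has all its private neighbors (w.r.t. `T'` in `E_i`) inside `B_i`. -/
theorem new_edges_private_neighbors_in_Bi
    {V : Type*} (G : SimpleGraph V) (k : ℕ) (b : ℕ → Sym2 V)
    (hM : MaxMatching G k b) (i : ℕ) (hi1 : 1 ≤ i) (hik : i ≤ k)
    (T T' : Set (Sym2 V)) (hTE : T ⊆ G.edgeSet) (hT'E : T' ⊆ G.edgeSet)
    (hT : MinTrOf (Eset G k b (i - 1)) T)
    (hT' : MinTrOf (Eset G k b i) T')
    (hsub : T ⊆ T') :
    ∀ e ∈ T' \ T, PrivE (Eset G k b i) e T' ⊆ Bset G k b i :=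
  new_edges_private_neighbors_in_Bi_general G k b i T T' hT hsub
end
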